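/- arXiv:1510.00911 — 2 statements merged into one kernel-verified Lean document; each statement's English description precedes it below -/
import Mathlib

section
/- A state-finite automaton A is retractable if and only if A is a direct sum of finitely many state-finite retractable automata, each containing a kernel, such that these kernels are pairwise isomorphic. -/
universe u v

/-- The transition function extended to words (`X*`). -/
def deltaStar {A X : Type*} (δ : A → X → A) : A → List X → A
  | a, [] => a
  | a, x :: p => deltaStar δ (δ a x) p

/-- `B` is a subautomaton of the automaton with transition `δ`. -/
def IsSubaut {A X : Type*} (δ : A → X → A) (B : Set A) : Prop :=
  B.Nonempty ∧ ∀ b ∈ B, ∀ x : X, δ b x ∈ B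

/-- `φ` is a retract homomorphism of the automaton onto the subautomaton `B`:
a homomorphism of `A` onto `B` leaving the elements of `B` fixed. -/
def IsRetractHom {A X : Type*} (δ : A → X → A) (B : Set A) (φ : A → A) : Prop :=
  (∀ a, φ a ∈ B) ∧ (∀ b ∈ B, φ b = b) ∧ ∀ a x, φ (δ a x) = δ (φ a) x

/-- `B` is a retract subautomaton. -/
def IsRetract {A X : Type*} (δ : A → X → A) (B : Set A) : Prop :=
  ∃ φ, IsRetractHom δ B φ

/-- An automaton is retractable if every subautomaton is retract. -/
def Retractable {A X : Type*} (δ : A → X → A) : Prop :=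
  ∀ B, IsSubaut δ B → IsRetract δ B

/-- Retractability of the subautomaton on the carrier `D` (homomorphisms are
represented by functions on the ambient state set, restricted to `D`). -/
def RetractableOn {A X : Type*} (δ : A → X → A) (D : Set A) : Prop :=
  ∀ C ⊆ D, IsSubaut δ C →
    ∃ φ : A → A, (∀ a ∈ D, φ a ∈ C) ∧ (∀ c ∈ C, φ c = c) ∧
      ∀ a ∈ D, ∀ x, φ (δ a x) = δ (φ a) x

/-- The principal subautomaton `R(a) = δ(a, X*)` generated by `a`. -/
def Rset {A X : Type*} (δ : A → X → A) (a : A) : Set A :=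
  {b | ∃ p : List X, deltaStar δ a p = b}

/-- The `R`-class `R_a = {b : R(b) = R(a)}`. -/
def Rclass {A X : Type*} (δ : A → X → A) (a : A) : Set A :=
  {b | Rset δ b = Rset δ a}

/-- `R[a] = R(a) − R_a`. -/
def Rideal {A X : Type*} (δ : A → X → A) (a : A) : Set A :=
  Rset δ a \ Rclass δ a

/-- The Rees congruence induced by `B`: two states are related iff they are
equal or both lie in `B`. -/
def reesRel {A : Type*} (B : Set A) (u v : A) : Prop :=
  u = v ∨ (u ∈ B ∧ v ∈ B)

/-- A minimal subautomaton: a subautomaton with no proper subautomaton. -/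
def IsMinimalSubaut {A X : Type*} (δ : A → X → A) (B : Set A) : Prop :=
  IsSubaut δ B ∧ ∀ C ⊆ B, IsSubaut δ C → C = B

/-- The automaton has a kernel: a subautomaton contained in every subautomaton. -/
def HasKernel {A X : Type*} (δ : A → X → A) : Prop :=
  ∃ K, IsSubaut δ K ∧ ∀ B, IsSubaut δ B → K ⊆ B

/-- The principal factor `R{a}` (the Rees factor of `R(a)` modulo `R[a]`,
described via the Rees congruence) is strongly connected. -/
def FactorSC {A X : Type*} (δ : A → X → A) (a : A) : Prop :=
  ∀ b ∈ Rset δ a, ∀ c ∈ Rset δ a,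
    ∃ p : List X, p ≠ [] ∧ reesRel (Rideal δ a) (deltaStar δ b p) c

/-- The principal factor `R{a}` is a strongly trap-connected non-trivial
one-trap automaton (with trap the class of `t`). -/
def FactorSTC {A X : Type*} (δ : A → X → A) (a : A) : Prop :=
  ∃ t ∈ Rset δ a,
    (∀ x, reesRel (Rideal δ a) (δ t x) t) ∧
    (∃ b ∈ Rset δ a, ¬ reesRel (Rideal δ a) b t) ∧
    (∀ b ∈ Rset δ a, (∀ x, reesRel (Rideal δ a) (δ b x) b) → reesRel (Rideal δ a) b t) ∧
    (∀ b ∈ Rset δ a, ∀ c ∈ Rset δ a, ¬ reesRel (Rideal δ a) b t →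
      ∃ p : List X, p ≠ [] ∧ reesRel (Rideal δ a) (deltaStar δ b p) c)

/-- The principal factor `R{a}` is a strongly trapped non-trivial one-trap
automaton (with trap the class of `t`). -/
def FactorST {A X : Type*} (δ : A → X → A) (a : A) : Prop :=
  ∃ t ∈ Rset δ a,
    (∃ b ∈ Rset δ a, ¬ reesRel (Rideal δ a) b t) ∧
    (∀ b ∈ Rset δ a, (∀ x, reesRel (Rideal δ a) (δ b x) b) → reesRel (Rideal δ a) b t) ∧
    (∀ b ∈ Rset δ a, ∀ x, reesRel (Rideal δ a) (δ b x) t)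

/-- Semiconnected: every principal factor is strongly connected or strongly
trap-connected. -/
def Semiconnected {A X : Type*} (δ : A → X → A) : Prop :=
  ∀ a, FactorSC δ a ∨ FactorSTC δ a

/-- The subautomaton on `D` is semiconnected, via the characterization: for
every subautomaton `C ⊆ D` and every `a ∈ C` there are `b ∈ C` and a nonempty
word `p` with `a = δ(b,p)`. -/
def SemiconnectedOn {A X : Type*} (δ : A → X → A) (D : Set A) : Prop :=
  ∀ C ⊆ D, IsSubaut δ C → ∀ a ∈ C, ∃ b ∈ C, ∃ p : List X, p ≠ [] ∧ deltaStar δ b p = a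

/-- The automaton is a dilation of its subautomaton `B`. -/
def IsDilationOf {A X : Type*} (δ : A → X → A) (B : Set A) : Prop :=
  IsSubaut δ B ∧ ∃ φ : A → A, (∀ a, φ a ∈ B) ∧ (∀ b ∈ B, φ b = b) ∧
    ∀ a x, δ a x = δ (φ a) x

/-- Extension of a partial transition function (`none` = the removed trap)
to words. -/
def pStar {C X : Type*} (d : C → X → Option C) : C → List X → Option C
  | a, [] => some a
  | a, x :: p => (d a x).bind fun b => pStar d b p

/-- The data of the Construction: a finite tree `(T, le)` with least element
`i0`; `C i` is the trap-removed part `A⁰ᵢ` of the automaton `Aᵢ`, with partial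
transition `d i` (`none` means the trap); `A_{i0}` is strongly connected and
the other `Aᵢ` are non-trivial strongly trap-connected one-trap automata;
`Φ i j` are the composite partial homomorphisms along covering chains
(given here as coherent data whose covering components satisfy conditions
(ii) and (iii)); `δ'` is the glued transition function on `A = ⋃ A⁰ᵢ`. -/
def ConstructionSpec {X : Type*} (T : Type*) (le : T → T → Prop) (i0 : T)
    (C : T → Type*) (d : ∀ i, C i → X → Option (C i))
    (Φ : ∀ i j, le j i → C i → C j)
    (δ' : (Σ i, C i) → X → Σ i, C i) : Prop :=
  (∀ i, le i i) ∧ (∀ i j, le i j → le j i → i = j) ∧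
  (∀ i j k, le i j → le j k → le i k) ∧
  Finite T ∧
  (∀ S : Set T, S.Nonempty → (∃ u, ∀ i ∈ S, le i u) → ∃ g ∈ S, ∀ i ∈ S, le i g) ∧
  (∀ i, le i0 i) ∧
  Nonempty (C i0) ∧
  (∀ (a : C i0) (x : X), (d i0 a x).isSome) ∧
  (∀ a b : C i0, ∃ p : List X, p ≠ [] ∧ pStar (d i0) a p = some b) ∧
  (∀ i, i ≠ i0 → Nonempty (C i) ∧
    (∀ a b : C i, ∃ p : List X, p ≠ [] ∧ pStar (d i) a p = some b) ∧
    (∀ a : C i, ∃ p : List X, p ≠ [] ∧ pStar (d i) a p = none)) ∧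
  (∀ i (h : le i i) (a : C i), Φ i i h a = a) ∧
  (∀ i j k (h1 : le j i) (h2 : le k j) (h3 : le k i) (a : C i),
    Φ j k h2 (Φ i j h1 a) = Φ i k h3 a) ∧
  (∀ i j (h : le j i), i ≠ j → (∀ k, le j k → le k i → k = j ∨ k = i) →
    (∀ (a : C i) (x : X) (b : C i),
      d i a x = some b → d j (Φ i j h a) x = some (Φ i j h b)) ∧
    ∃ (a : C i) (x : X), d i a x = none ∧ (d j (Φ i j h a) x).isSome) ∧
  (∀ i (a : C i) (x : X), ∃ (j : T) (hj : le j i) (b : C j),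
    δ' ⟨i, a⟩ x = ⟨j, b⟩ ∧ d j (Φ i j hj a) x = some b ∧
    ∀ k (hk : le k i), (d k (Φ i k hk a) x).isSome → le k j)

/-
In a finite retractable automaton every principal subautomaton `R(a)` contains exactly one
minimal subautomaton: a retraction onto the union of two minimal subautomata of `R(a)` sends
`R(a)` into one of them, which therefore contains the other. Grouping the states by this minimal
subautomaton gives the summands, whose kernels are the minimal subautomata. A retraction onto one
minimal subautomaton maps any other one onto it, so minimal subautomata are related by surjective
homomorphisms in both directions, which are bijective by finiteness.

Conversely, a retraction onto a subautomaton `B` is assembled summand by summand: a summand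
meeting `B` is retracted onto its trace on `B`, and a summand missing `B` is retracted onto its
kernel, which is then carried isomorphically onto the kernel of a summand meeting `B`; that kernel
lies in `B`.
-/

section Automaton

variable {A X : Type*} {δ : A → X → A}

theorem deltaStar_append (a : A) (p q : List X) :
    deltaStar δ a (p ++ q) = deltaStar δ (deltaStar δ a p) q := by
  induction p generalizing a with
  | nil => rfl
  | cons x p ih => exact ih (δ a x)

theorem map_deltaStar {φ : A → A} (hφ : ∀ a x, φ (δ a x) = δ (φ a) x) (a : A) (p : List X) :
    φ (deltaStar δ a p) = deltaStar δ (φ a) p := by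
  induction p generalizing a with
  | nil => rfl
  | cons x p ih => exact (ih (δ a x)).trans (congrArg (deltaStar δ · p) (hφ a x))

theorem mem_Rset_self (a : A) : a ∈ Rset δ a := ⟨[], rfl⟩

theorem isSubaut_Rset (a : A) : IsSubaut δ (Rset δ a) := by
  refine ⟨⟨a, mem_Rset_self a⟩, ?_⟩
  rintro b ⟨p, rfl⟩ x
  exact ⟨p ++ [x], deltaStar_append a p [x]⟩

namespace IsSubaut

variable {B C : Set A}

theorem Rset_subset (hB : IsSubaut δ B) {a : A} (ha : a ∈ B) : Rset δ a ⊆ B := by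
  rintro b ⟨p, rfl⟩
  induction p generalizing a with
  | nil => exact ha
  | cons x p ih => exact ih (hB.2 a ha x)

theorem union (hB : IsSubaut δ B) (hC : IsSubaut δ C) : IsSubaut δ (B ∪ C) := by
  refine ⟨hB.1.mono Set.subset_union_left, ?_⟩
  rintro b (hb | hb) x
  · exact Or.inl (hB.2 b hb x)
  · exact Or.inr (hC.2 b hb x)

theorem inter (hB : IsSubaut δ B) (hC : ∀ c ∈ C, ∀ x, δ c x ∈ C) (hne : (B ∩ C).Nonempty) :
    IsSubaut δ (B ∩ C) :=
  ⟨hne, fun b hb x => ⟨hB.2 b hb.1 x, hC b hb.2 x⟩⟩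

theorem image (hB : IsSubaut δ B) {φ : A → A} (hφ : ∀ a x, φ (δ a x) = δ (φ a) x) :
    IsSubaut δ (φ '' B) := by
  refine ⟨hB.1.image φ, ?_⟩
  rintro _ ⟨a, ha, rfl⟩ x
  exact ⟨δ a x, hB.2 a ha x, hφ a x⟩

theorem exists_minimal [Finite A] (hB : IsSubaut δ B) : ∃ M ⊆ B, IsMinimalSubaut δ M := by
  obtain ⟨M, hMB, hM⟩ := Finite.exists_le_minimal hB
  exact ⟨M, hMB, hM.prop, fun C hCM hC => hM.eq_of_le hC hCM⟩

end IsSubaut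

theorem exists_surjective_injective_factorization {α β : Type*} [Finite α] (f : α → β) :
    ∃ (n : ℕ) (π : α → Fin n) (g : Fin n → β),
      Function.Surjective π ∧ Function.Injective g ∧ ∀ a, g (π a) = f a := by
  let e := Finite.equivFin (Set.range f)
  refine ⟨_, e ∘ Set.rangeFactorization f, Subtype.val ∘ e.symm,
    e.surjective.comp Set.rangeFactorization_surjective,
    Subtype.val_injective.comp e.symm.injective, fun a => ?_⟩
  exact congrArg Subtype.val (e.symm_apply_apply _)

/-- A chosen minimal subautomaton of `R(a)`; in a retractable automaton it is the kernel
of `R(a)`. -/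
noncomputable def principalKernel [Finite A] (δ : A → X → A) (a : A) : Set A :=
  (isSubaut_Rset (δ := δ) a).exists_minimal.choose

section principalKernel

variable [Finite A]

theorem principalKernel_subset_Rset (a : A) : principalKernel δ a ⊆ Rset δ a :=
  (isSubaut_Rset a).exists_minimal.choose_spec.1

theorem isMinimalSubaut_principalKernel (a : A) : IsMinimalSubaut δ (principalKernel δ a) :=
  (isSubaut_Rset a).exists_minimal.choose_spec.2

theorem IsSubaut.principalKernel_subset {C : Set A} (hC : IsSubaut δ C) {a : A} (ha : a ∈ C) :
    principalKernel δ a ⊆ C :=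
  (principalKernel_subset_Rset a).trans (hC.Rset_subset ha)

end principalKernel

namespace Retractable

variable (hret : Retractable δ)
include hret

theorem minimal_eq_of_subset_Rset {a : A} {M N : Set A}
    (hM : IsMinimalSubaut δ M) (hN : IsMinimalSubaut δ N)
    (hMa : M ⊆ Rset δ a) (hNa : N ⊆ Rset δ a) : M = N := by
  obtain ⟨φ, hφB, hφfix, hφhom⟩ := hret _ (hM.1.union hN.1)
  -- `φ` maps `R(a)` into whichever of `M`, `N` contains `φ a`, and fixes the other one.
  have into : ∀ {P Q : Set A}, IsSubaut δ P → φ a ∈ P → Q ⊆ Rset δ a → Q ⊆ M ∪ N → Q ⊆ P := by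
    rintro P Q hP hφa hQa hQ b hb
    obtain ⟨p, rfl⟩ := hQa hb
    rw [← hφfix _ (hQ hb), map_deltaStar hφhom]
    exact hP.Rset_subset hφa ⟨p, rfl⟩
  rcases hφB a with hφa | hφa
  · exact (hM.2 N (into hM.1 hφa hNa Set.subset_union_right) hN.1).symm
  · exact hN.2 M (into hN.1 hφa hMa Set.subset_union_left) hM.1

theorem principalKernel_eq_of_mem_Rset [Finite A] {a b : A} (hb : b ∈ Rset δ a) :
    principalKernel δ b = principalKernel δ a :=
  hret.minimal_eq_of_subset_Rset (isMinimalSubaut_principalKernel b)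
    (isMinimalSubaut_principalKernel a)
    ((principalKernel_subset_Rset b).trans ((isSubaut_Rset a).Rset_subset hb))
    (principalKernel_subset_Rset a)

theorem exists_hom_image_eq_of_minimal {P Q : Set A}
    (hP : IsMinimalSubaut δ P) (hQ : IsMinimalSubaut δ Q) :
    ∃ φ : A → A, φ '' P = Q ∧ ∀ a x, φ (δ a x) = δ (φ a) x := by
  obtain ⟨φ, hφQ, -, hφhom⟩ := hret Q hQ.1
  exact ⟨φ, hQ.2 _ (Set.image_subset_iff.2 fun a _ => hφQ a) (hP.1.image hφhom), hφhom⟩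

theorem exists_bijOn_of_minimal [Finite A] {P Q : Set A}
    (hP : IsMinimalSubaut δ P) (hQ : IsMinimalSubaut δ Q) :
    ∃ φ : A → A, Set.BijOn φ P Q ∧ ∀ a ∈ P, ∀ x, φ (δ a x) = δ (φ a) x := by
  obtain ⟨φ, hφ, hφhom⟩ := hret.exists_hom_image_eq_of_minimal hP hQ
  obtain ⟨ψ, hψ, -⟩ := hret.exists_hom_image_eq_of_minimal hQ hP
  have hcard : (φ '' P).ncard = P.ncard := by
    refine le_antisymm (Set.ncard_image_le P.toFinite) ?_
    calc P.ncard = (ψ '' Q).ncard := by rw [hψ]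
      _ ≤ Q.ncard := Set.ncard_image_le Q.toFinite
      _ = (φ '' P).ncard := by rw [hφ]
  refine ⟨φ, ⟨?_, Set.injOn_of_ncard_image_eq hcard, hφ.symm.subset⟩, fun a _ x => hφhom a x⟩
  exact hφ ▸ Set.mapsTo_image φ P

theorem retractableOn (D : Set A) : RetractableOn δ D := by
  intro C _ hC
  obtain ⟨φ, hφC, hφfix, hφhom⟩ := hret C hC
  exact ⟨φ, fun a _ => hφC a, hφfix, fun a _ x => hφhom a x⟩

theorem exists_directSum_kernels [Finite A] :
    ∃ (n : ℕ) (π : A → Fin n), Function.Surjective π ∧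
      (∀ a x, π (δ a x) = π a) ∧
      (∀ i, RetractableOn δ (π ⁻¹' {i})) ∧
      ∃ K : Fin n → Set A,
        (∀ i, K i ⊆ π ⁻¹' {i} ∧ IsSubaut δ (K i) ∧
          ∀ C ⊆ π ⁻¹' {i}, IsSubaut δ C → K i ⊆ C) ∧
        ∀ i j, ∃ φ : A → A, Set.BijOn φ (K i) (K j) ∧
          ∀ a ∈ K i, ∀ x, φ (δ a x) = δ (φ a) x := by
  obtain ⟨n, π, K, hπ, hK, hKπ⟩ := exists_surjective_injective_factorization (principalKernel δ)
  have hπ_eq {a b : A} (hb : b ∈ Rset δ a) : π b = π a :=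
    hK (by rw [hKπ, hKπ, hret.principalKernel_eq_of_mem_Rset hb])
  refine ⟨n, π, hπ, fun a x => hπ_eq ⟨[x], rfl⟩, fun i => hret.retractableOn _, K,
    fun i => ?_, fun i j => ?_⟩
  · obtain ⟨a, rfl⟩ := hπ i
    refine ⟨?_, ?_, fun C hCi hC => ?_⟩
    · rw [hKπ]
      exact fun b hb => hπ_eq (principalKernel_subset_Rset a hb)
    · rw [hKπ]
      exact (isMinimalSubaut_principalKernel a).1
    · obtain ⟨c, hc⟩ := hC.1
      rw [← (hCi hc : π c = π a), hKπ]
      exact hC.principalKernel_subset hc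
  · obtain ⟨a, rfl⟩ := hπ i
    obtain ⟨b, rfl⟩ := hπ j
    rw [hKπ, hKπ]
    exact hret.exists_bijOn_of_minimal (isMinimalSubaut_principalKernel a)
      (isMinimalSubaut_principalKernel b)

end Retractable

namespace RetractableOn

variable {D B : Set A} (hD : RetractableOn δ D)
include hD

theorem exists_retraction_inter (hDδ : ∀ a ∈ D, ∀ x, δ a x ∈ D) (hB : IsSubaut δ B)
    (hne : (B ∩ D).Nonempty) :
    ∃ φ : A → A, (∀ a ∈ D, φ a ∈ B) ∧ (∀ b ∈ B ∩ D, φ b = b) ∧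
      ∀ a ∈ D, ∀ x, φ (δ a x) = δ (φ a) x := by
  obtain ⟨φ, hφB, hφfix, hφhom⟩ := hD _ Set.inter_subset_right (hB.inter hDδ hne)
  exact ⟨φ, fun a ha => (hφB a ha).1, hφfix, hφhom⟩

theorem exists_hom_into_of_subaut {K : Set A} (hKD : K ⊆ D) (hK : IsSubaut δ K) {θ : A → A}
    (hθB : Set.MapsTo θ K B) (hθhom : ∀ a ∈ K, ∀ x, θ (δ a x) = δ (θ a) x) :
    ∃ φ : A → A, (∀ a ∈ D, φ a ∈ B) ∧ ∀ a ∈ D, ∀ x, φ (δ a x) = δ (φ a) x := by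
  obtain ⟨ψ, hψK, -, hψhom⟩ := hD K hKD hK
  refine ⟨θ ∘ ψ, fun a ha => hθB (hψK a ha), fun a ha x => ?_⟩
  rw [Function.comp_apply, hψhom a ha x, hθhom _ (hψK a ha)]
  rfl

end RetractableOn

theorem isRetract_of_forall_fiber {ι : Type*} {π : A → ι} (hπ : ∀ a x, π (δ a x) = π a)
    {B : Set A} (h : ∀ i, ∃ φ : A → A, (∀ a ∈ π ⁻¹' {i}, φ a ∈ B) ∧ (∀ b ∈ B ∩ π ⁻¹' {i}, φ b = b) ∧
      ∀ a ∈ π ⁻¹' {i}, ∀ x, φ (δ a x) = δ (φ a) x) :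
    IsRetract δ B := by
  choose φ hφB hφfix hφhom using h
  refine ⟨fun a => φ (π a) a, fun a => hφB _ a rfl, fun b hb => hφfix _ b ⟨hb, rfl⟩,
    fun a x => ?_⟩
  simp only [hπ a x]
  exact hφhom _ a rfl x

theorem retractable_of_directSum_kernels {n : ℕ} (π : A → Fin n) (hπ : ∀ a x, π (δ a x) = π a)
    (hret : ∀ i, RetractableOn δ (π ⁻¹' {i})) (K : Fin n → Set A)
    (hK : ∀ i, K i ⊆ π ⁻¹' {i} ∧ IsSubaut δ (K i) ∧
      ∀ C ⊆ π ⁻¹' {i}, IsSubaut δ C → K i ⊆ C)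
    (hiso : ∀ i j, ∃ φ : A → A, Set.BijOn φ (K i) (K j) ∧
      ∀ a ∈ K i, ∀ x, φ (δ a x) = δ (φ a) x) :
    Retractable δ := by
  intro B hB
  have hfiber (i : Fin n) : ∀ a ∈ π ⁻¹' {i}, ∀ x, δ a x ∈ π ⁻¹' {i} :=
    fun a ha x => (hπ a x).trans ha
  obtain ⟨b₀, hb₀⟩ := hB.1
  have hKB : K (π b₀) ⊆ B := by
    have hne : (B ∩ π ⁻¹' {π b₀}).Nonempty := ⟨b₀, hb₀, rfl⟩
    exact ((hK _).2.2 _ Set.inter_subset_right (hB.inter (hfiber _) hne)).trans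
      Set.inter_subset_left
  refine isRetract_of_forall_fiber hπ fun i => ?_
  by_cases hne : (B ∩ π ⁻¹' {i}).Nonempty
  · exact (hret i).exists_retraction_inter (hfiber i) hB hne
  · obtain ⟨θ, hθ, hθhom⟩ := hiso i (π b₀)
    obtain ⟨φ, hφB, hφhom⟩ :=
      (hret i).exists_hom_into_of_subaut (hK i).1 (hK i).2.1 (hθ.mapsTo.mono_right hKB) hθhom
    exact ⟨φ, hφB, fun b hb => absurd ⟨b, hb⟩ hne, hφhom⟩

end Automaton

theorem stmt_7_general {A X : Type*} [Finite A]
    (δ : A → X → A) :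
    Retractable δ ↔
      ∃ (n : ℕ) (π : A → Fin n), Function.Surjective π ∧
        (∀ a x, π (δ a x) = π a) ∧
        (∀ i, RetractableOn δ (π ⁻¹' {i})) ∧
        ∃ K : Fin n → Set A,
          (∀ i, K i ⊆ π ⁻¹' {i} ∧ IsSubaut δ (K i) ∧
            ∀ C ⊆ π ⁻¹' {i}, IsSubaut δ C → K i ⊆ C) ∧
          ∀ i j, ∃ φ : A → A, Set.BijOn φ (K i) (K j) ∧
            ∀ a ∈ K i, ∀ x, φ (δ a x) = δ (φ a) x := by
  refine ⟨fun hret => hret.exists_directSum_kernels, ?_⟩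
  rintro ⟨n, π, -, hπ, hret, K, hK, hiso⟩
  exact retractable_of_directSum_kernels π hπ hret K hK hiso

/-- Theorem 2, (i) ⇔ (ii). -/
theorem stmt_7 {A X : Type*} [Finite A] [Nonempty A] [Nonempty X]
    (δ : A → X → A) :
    Retractable δ ↔
      ∃ (n : ℕ) (π : A → Fin n), Function.Surjective π ∧
        (∀ a x, π (δ a x) = π a) ∧
        (∀ i, RetractableOn δ (π ⁻¹' {i})) ∧
        ∃ K : Fin n → Set A,
          (∀ i, K i ⊆ π ⁻¹' {i} ∧ IsSubaut δ (K i) ∧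
            ∀ C ⊆ π ⁻¹' {i}, IsSubaut δ C → K i ⊆ C) ∧
          ∀ i j, ∃ φ : A → A, Set.BijOn φ (K i) (K j) ∧
            ∀ a ∈ K i, ∀ x, φ (δ a x) = δ (φ a) x :=
  stmt_7_general δ
end

section
/- In the automaton A = (A_i, X, δ_i; φ_{i,j}, T) of the Construction, every subautomaton R of A has state set of the form ∪_{j∈Γ} A^0_j for some nonempty ideal Γ of the tree T (i.e., i ∈ Γ and j ≤ i imply j ∈ Γ). -/
universe u v

/-!
A subautomaton `R` is closed under words. Since each `A⁰ᵢ` is strongly connected and `δ'` agrees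
with `δᵢ` on transitions that stay inside `A⁰ᵢ`, `R` is a union of whole components `A⁰ᵢ`.
If `A⁰ᵢ ⊆ R` and `i` covers `j`, condition (iii) gives a transition of `Aᵢ` into its trap that
`Aⱼ` performs inside `A⁰ⱼ`; the glued transition then lands in some `A⁰ₖ` with `j ≤ k < i`,
i.e. in `A⁰ⱼ`, so `A⁰ⱼ ⊆ R`. In a finite poset, closure under covering steps down already
gives a lower set.
-/

theorem isLowerSet_of_covBy {α : Type*} [PartialOrder α] [IsStronglyCoatomic α]
    [WellFoundedLT α] {s : Set α} (hs : ∀ ⦃a b⦄, a ⋖ b → b ∈ s → a ∈ s) : IsLowerSet s := by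
  intro b
  induction b using WellFoundedLT.induction with
  | _ b ih =>
    intro a hab hb
    obtain rfl | hlt := hab.eq_or_lt
    · exact hb
    obtain ⟨c, hac, hcb⟩ := exists_le_covBy_of_lt hlt
    exact ih c hcb.lt hac (hs hcb hb)

theorem deltaStar_mem {A X : Type*} {δ : A → X → A} {B : Set A}
    (hB : ∀ b ∈ B, ∀ x, δ b x ∈ B) (p : List X) {a : A} (ha : a ∈ B) :
    deltaStar δ a p ∈ B := by
  induction p generalizing a with
  | nil => exact ha
  | cons x q ih => exact ih (hB a ha x)

theorem deltaStar_mk_of_pStar_eq_some {ι X : Type*} {C : ι → Type*}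
    {d : ∀ i, C i → X → Option (C i)} {δ' : (Σ i, C i) → X → Σ i, C i}
    (hd : ∀ i (a : C i) x b, d i a x = some b → δ' ⟨i, a⟩ x = ⟨i, b⟩)
    (p : List X) {i : ι} {a b : C i} (hp : pStar (d i) a p = some b) :
    deltaStar δ' ⟨i, a⟩ p = ⟨i, b⟩ := by
  induction p generalizing a with
  | nil =>
    cases Option.some_inj.mp hp
    rfl
  | cons x q ih =>
    cases hc : d i a x with
    | none => simp [pStar, hc] at hp
    | some c =>
      simp only [pStar, hc, Option.bind_some] at hp
      exact (congrArg (deltaStar δ' · q) (hd i a x c hc)).trans (ih hp)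

namespace ConstructionSpec

variable {X T : Type*} {le : T → T → Prop} {i0 : T} {C : T → Type*}
  {d : ∀ i, C i → X → Option (C i)} {Φ : ∀ i j, le j i → C i → C j}
  {δ' : (Σ i, C i) → X → Σ i, C i}

abbrev partialOrder (h : ConstructionSpec T le i0 C d Φ δ') : PartialOrder T where
  le := le
  le_refl := h.1
  le_trans := h.2.2.1
  le_antisymm := h.2.1

theorem finite (h : ConstructionSpec T le i0 C d Φ δ') : Finite T :=
  h.2.2.2.1

theorem delta_mk_of_d_eq_some (h : ConstructionSpec T le i0 C d Φ δ') {i : T} {a b : C i}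
    {x : X} (hab : d i a x = some b) : δ' ⟨i, a⟩ x = ⟨i, b⟩ := by
  obtain ⟨hrefl, hanti, -, -, -, -, -, -, -, -, hΦid, -, -, hδ'⟩ := h
  obtain ⟨j, hji, b', hδ, hd, hmax⟩ := hδ' i a x
  have hij : le i j := hmax i (hrefl i) (by rw [hΦid, hab]; rfl)
  cases hanti j i hji hij
  rw [hΦid, hab, Option.some_inj] at hd
  rw [hδ, hd]

theorem exists_pStar_eq_some (h : ConstructionSpec T le i0 C d Φ δ') (i : T) (a b : C i) :
    ∃ p, pStar (d i) a p = some b := by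
  obtain ⟨-, -, -, -, -, -, -, -, hconn0, hconn, -⟩ := h
  by_cases hi : i = i0
  · subst hi
    obtain ⟨p, -, hp⟩ := hconn0 a b
    exact ⟨p, hp⟩
  · obtain ⟨p, -, hp⟩ := (hconn i hi).2.1 a b
    exact ⟨p, hp⟩

theorem mk_mem_of_mk_mem (h : ConstructionSpec T le i0 C d Φ δ') {R : Set (Σ i, C i)}
    (hR : IsSubaut δ' R) {i : T} {a : C i} (ha : ⟨i, a⟩ ∈ R) (b : C i) : ⟨i, b⟩ ∈ R := by
  obtain ⟨p, hp⟩ := h.exists_pStar_eq_some i a b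
  rw [← deltaStar_mk_of_pStar_eq_some (fun _ _ _ _ => h.delta_mk_of_d_eq_some) p hp]
  exact deltaStar_mem hR.2 p ha

theorem exists_mk_mem_of_covers (h : ConstructionSpec T le i0 C d Φ δ')
    {R : Set (Σ i, C i)} (hR : IsSubaut δ' R) {i j : T} (hji : le j i) (hne : i ≠ j)
    (hcov : ∀ k, le j k → le k i → k = j ∨ k = i) {a : C i} (ha : ⟨i, a⟩ ∈ R) :
    ∃ b : C j, ⟨j, b⟩ ∈ R := by
  have hcomponent := h.mk_mem_of_mk_mem hR ha
  obtain ⟨-, -, -, -, -, -, -, -, -, -, hΦid, -, hcovering, hδ'⟩ := h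
  obtain ⟨-, e, x, hexit, hstay⟩ := hcovering i j hji hne hcov
  obtain ⟨k, hki, b, hδ, hd, hmax⟩ := hδ' i e x
  have hki_ne : k ≠ i := by
    rintro rfl
    rw [hΦid, hexit] at hd
    cases hd
  obtain rfl := (hcov k (hmax j hji hstay) hki).resolve_right hki_ne
  exact ⟨b, hδ ▸ hR.2 _ (hcomponent e) x⟩

end ConstructionSpec

/-- in the automaton of the Construction, every subautomaton has
state set `⋃_{j ∈ Γ} A⁰ⱼ` for some nonempty ideal `Γ` of the tree `T`. -/
theorem stmt_16 {X T : Type*} (le : T → T → Prop) (i0 : T)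
    (C : T → Type*) (d : ∀ i, C i → X → Option (C i))
    (Φ : ∀ i j, le j i → C i → C j) (δ' : (Σ i, C i) → X → Σ i, C i)
    (h : ConstructionSpec T le i0 C d Φ δ') :
    ∀ R : Set (Σ i, C i), IsSubaut δ' R →
      ∃ Γ : Set T, Γ.Nonempty ∧ (∀ i ∈ Γ, ∀ j, le j i → j ∈ Γ) ∧
        R = {p : Σ i, C i | p.1 ∈ Γ} := by
  intro R hR
  let := h.partialOrder
  have := h.finite
  refine ⟨{i | ∃ a : C i, ⟨i, a⟩ ∈ R}, ?_, fun i hi j hji => ?_, ?_⟩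
  · obtain ⟨⟨i, a⟩, ha⟩ := hR.1
    exact ⟨i, a, ha⟩
  · refine isLowerSet_of_covBy ?_ hji hi
    rintro j i hji ⟨a, ha⟩
    exact h.exists_mk_mem_of_covers hR hji.le hji.ne' (fun k => hji.eq_or_eq) ha
  · ext ⟨i, a⟩
    exact ⟨fun ha => ⟨a, ha⟩, fun ⟨b, hb⟩ => h.mk_mem_of_mk_mem hR hb a⟩
end
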